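/- For every μ ∈ (0,1), ‖R(-1 : (1/μ)A_μ)g - R(-1 : A₀)g‖²_{L²[0,π]} ≤ μ‖g‖²_{L²[0,π]} for all g ∈ L²[0,π], where (1/μ)A_μ and A₀ are the diagonal operators on the cosine basis with eigenvalues k·tanh(√μ k)/√μ and k², respectively. -/

import Mathlib

/-!
Both resolvents are diagonal in the cosine basis, so it suffices to bound the squared difference
of their multipliers by `μ` at every frequency `k`. The elementary bounds
`x / (1 + x) ≤ tanh x ≤ x` squeeze the Dirichlet-to-Neumann eigenvalue `λ` between
`k² / (1 + √μ k)` and `k²`, whence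
`0 ≤ 1 / (1 + λ) - 1 / (1 + k²) ≤ √μ k³ / ((1 + √μ k + k²)(1 + k²)) ≤ √μ`.
-/

open Real

namespace Real

theorem sinh_le_mul_cosh {x : ℝ} (hx : 0 ≤ x) : sinh x ≤ x * cosh x := by
  have hderiv (y : ℝ) :
      HasDerivAt (fun t ↦ t * cosh t - sinh t) (y * sinh y) y :=
    (((hasDerivAt_id' y).mul (hasDerivAt_cosh y)).sub (hasDerivAt_sinh y)).congr_deriv (by ring)
  have hmono : MonotoneOn (fun t ↦ t * cosh t - sinh t) (Set.Ici 0) := by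
    refine monotoneOn_of_hasDerivWithinAt_nonneg (convex_Ici 0) (by fun_prop)
      (fun y _ ↦ (hderiv y).hasDerivWithinAt) fun y hy ↦ ?_
    rw [interior_Ici, Set.mem_Ioi] at hy
    exact mul_nonneg hy.le (sinh_nonneg_iff.mpr hy.le)
  simpa using hmono Set.self_mem_Ici hx hx

theorem tanh_le_self {x : ℝ} (hx : 0 ≤ x) : tanh x ≤ x := by
  rw [tanh_eq_sinh_div_cosh, div_le_iff₀ (cosh_pos x)]
  exact sinh_le_mul_cosh hx

theorem tanh_eq_exp_two_mul (x : ℝ) : tanh x = (exp (2 * x) - 1) / (exp (2 * x) + 1) := by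
  have hx : exp x ≠ 0 := (exp_pos x).ne'
  rw [tanh_eq, two_mul, exp_add, exp_neg]
  field_simp

theorem div_one_add_le_tanh {x : ℝ} (hx : 0 ≤ x) : x / (1 + x) ≤ tanh x := by
  rw [tanh_eq_exp_two_mul, div_le_div_iff₀ (by linarith) (by positivity)]
  nlinarith [add_one_le_exp (2 * x)]

end Real

/-- The eigenvalue of `(1/μ) A_μ` at frequency `x`, written with `s = √μ`. -/
noncomputable def dtnEigenvalue (s x : ℝ) : ℝ := x * tanh (s * x) / s

section

variable {s x : ℝ}

theorem dtnEigenvalue_le_sq (hs : 0 < s) (hx : 0 ≤ x) : dtnEigenvalue s x ≤ x ^ 2 := by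
  rw [dtnEigenvalue, div_le_iff₀ hs]
  nlinarith [mul_le_mul_of_nonneg_left (tanh_le_self (mul_nonneg hs.le hx)) hx]

theorem sq_div_le_dtnEigenvalue (hs : 0 < s) (hx : 0 ≤ x) :
    x ^ 2 / (1 + s * x) ≤ dtnEigenvalue s x := by
  have hsx : 0 ≤ s * x := mul_nonneg hs.le hx
  calc x ^ 2 / (1 + s * x) = x / s * (s * x / (1 + s * x)) := by field_simp
    _ ≤ x / s * tanh (s * x) := by gcongr; exact div_one_add_le_tanh hsx
    _ = dtnEigenvalue s x := by rw [dtnEigenvalue]; ring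

theorem one_div_one_add_sub_le {a : ℝ} (hs : 0 ≤ s) (hx : 0 ≤ x)
    (ha : x ^ 2 / (1 + s * x) ≤ a) : 1 / (1 + a) - 1 / (1 + x ^ 2) ≤ s := by
  have hsx : 0 ≤ s * x := mul_nonneg hs hx
  have hlower : (1 + s * x + x ^ 2) / (1 + s * x) ≤ 1 + a := by
    rw [add_div, div_self (by positivity)]; linarith
  calc 1 / (1 + a) - 1 / (1 + x ^ 2)
      ≤ (1 + s * x) / (1 + s * x + x ^ 2) - 1 / (1 + x ^ 2) := by
        refine sub_le_sub_right ?_ _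
        simpa only [one_div_div] using one_div_le_one_div_of_le (by positivity) hlower
    _ = s * x ^ 3 / ((1 + s * x + x ^ 2) * (1 + x ^ 2)) := by
        field_simp; ring
    _ ≤ s := by
        rw [div_le_iff₀ (by positivity)]
        nlinarith [mul_nonneg hs (sq_nonneg (x - 1)), mul_nonneg hsx (sq_nonneg x),
          mul_nonneg hs (pow_nonneg hx 3), mul_nonneg hs (pow_nonneg hx 4)]

theorem sq_resolvent_sub_le (hs : 0 < s) (hx : 0 ≤ x) :
    (1 / (1 + dtnEigenvalue s x) - 1 / (1 + x ^ 2)) ^ 2 ≤ s ^ 2 := by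
  have hlower := sq_div_le_dtnEigenvalue hs hx
  have hnonneg : 0 ≤ 1 / (1 + dtnEigenvalue s x) - 1 / (1 + x ^ 2) := by
    have hpos : 0 < 1 + dtnEigenvalue s x := by
      have : 0 ≤ x ^ 2 / (1 + s * x) := by positivity
      linarith
    rw [sub_nonneg]
    exact one_div_le_one_div_of_le hpos (by linarith [dtnEigenvalue_le_sq hs hx])
  exact pow_le_pow_left₀ hnonneg (one_div_one_add_sub_le hs.le hx hlower) 2

end

theorem tsum_mul_le_mul_tsum {ι : Type*} {c f : ι → ℝ} {C : ℝ} (hc : ∀ i, 0 ≤ c i)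
    (hcC : ∀ i, c i ≤ C) (hf : ∀ i, 0 ≤ f i) (hsum : Summable f) :
    ∑' i, c i * f i ≤ C * ∑' i, f i := by
  have hle (i : ι) : c i * f i ≤ C * f i := mul_le_mul_of_nonneg_right (hcC i) (hf i)
  rw [← tsum_mul_left]
  exact Summable.tsum_le_tsum hle
    (Summable.of_nonneg_of_le (fun i ↦ mul_nonneg (hc i) (hf i)) hle (hsum.mul_left C))
    (hsum.mul_left C)

theorem resolvent_convergence_general (μ : ℝ) (hμ0 : 0 < μ)
    (g : ℕ → ℝ) (hg : Summable fun k : ℕ => (g k) ^ 2) :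
    (∑' k : ℕ, (1 / (1 + (k : ℝ) * Real.tanh (Real.sqrt μ * k) / Real.sqrt μ)
        - 1 / (1 + (k : ℝ) ^ 2)) ^ 2 * (g k) ^ 2)
      ≤ μ * ∑' k : ℕ, (g k) ^ 2 := by
  have hs : 0 < √μ := sqrt_pos.mpr hμ0
  calc _ ≤ √μ ^ 2 * ∑' k : ℕ, (g k) ^ 2 :=
        tsum_mul_le_mul_tsum (fun _ ↦ sq_nonneg _)
          (fun k ↦ sq_resolvent_sub_le hs k.cast_nonneg) (fun _ ↦ sq_nonneg _) hg
    _ = μ * ∑' k : ℕ, (g k) ^ 2 := by rw [sq_sqrt hμ0.le]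

/-- Resolvent convergence in Fourier coefficients: for μ ∈ (0,1) and g ∈ L²[0,π]
with cosine coefficients g_k, the eigenvalues of (1/μ)A_μ are
λ_μ(k) = k·tanh(√μ k)/√μ and those of A₀ are k², so
‖R(-1:(1/μ)A_μ)g - R(-1:A₀)g‖² = ∑_k (1/(1+λ_μ(k)) - 1/(1+k²))² g_k² ≤ μ‖g‖². -/
theorem resolvent_convergence (μ : ℝ) (hμ0 : 0 < μ) (hμ1 : μ < 1)
    (g : ℕ → ℝ) (hg : Summable fun k : ℕ => (g k) ^ 2) :
    (∑' k : ℕ, (1 / (1 + (k : ℝ) * Real.tanh (Real.sqrt μ * k) / Real.sqrt μ)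
        - 1 / (1 + (k : ℝ) ^ 2)) ^ 2 * (g k) ^ 2)
      ≤ μ * ∑' k : ℕ, (g k) ^ 2 :=
  resolvent_convergence_general μ hμ0 g hg
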